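/- Let H be a closed subgroup of GL(n,ℝ) and let U ⊆ ℝⁿ be open and Hᵀ-invariant. Then the following are equivalent: (a) there exists a topological quasi-section C ⊆ U whose closure is compact and contained in U; (b) the orbit space U/Hᵀ is compact and the action of H on U is proper, i.e., the preimage of every compact subset of U × U under the map H × U → U × U, (h,ξ) ↦ (hᵀξ, ξ), is compact. Moreover, if either condition holds, then U/Hᵀ is Hausdorff and metrizable. -/

import Mathlib

open Matrix Set Topology
open scoped MatrixGroups

noncomputable section

variable {n : ℕ}

/-- The transpose action of an element of `GL(n,ℝ)` on `ℝⁿ`: `(h, ξ) ↦ hᵀ ξ`. -/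
def tAct (h : GL (Fin n) ℝ) (v : Fin n → ℝ) : Fin n → ℝ :=
  ((h : Matrix (Fin n) (Fin n) ℝ)ᵀ) *ᵥ v

/-- A set `U ⊆ ℝⁿ` is `Hᵀ`-invariant. -/
def TInvariant (H : Subgroup (GL (Fin n) ℝ)) (U : Set (Fin n → ℝ)) : Prop :=
  ∀ h ∈ H, ∀ v ∈ U, tAct h v ∈ U

/-- `HᵀC = {hᵀ c : h ∈ H, c ∈ C}`. -/
def tOrb (H : Subgroup (GL (Fin n) ℝ)) (C : Set (Fin n → ℝ)) : Set (Fin n → ℝ) :=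
  {v | ∃ h ∈ H, ∃ c ∈ C, tAct h c = v}

/-- `((Y,Z)) = {h ∈ H : hᵀY ∩ Z ≠ ∅}`, as a set of elements of `GL(n,ℝ)`. -/
def meetSet (H : Subgroup (GL (Fin n) ℝ)) (Y Z : Set (Fin n → ℝ)) :
    Set (GL (Fin n) ℝ) :=
  {h | h ∈ H ∧ ∃ y ∈ Y, tAct h y ∈ Z}

/-- `C` is a topological quasi-section for `U`: `C` is open, `HᵀC = U`, and `((C,C))`
is relatively compact. -/
def IsQuasiSection (H : Subgroup (GL (Fin n) ℝ)) (U C : Set (Fin n → ℝ)) : Prop :=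
  IsOpen C ∧ C ⊆ U ∧ tOrb H C = U ∧ IsCompact (closure (meetSet H C C))

/-- `C` is a topological section for `U`: the map `H × C → U, (h,c) ↦ hᵀc` is a
homeomorphism. -/
def IsTopSection (H : Subgroup (GL (Fin n) ℝ)) (U C : Set (Fin n → ℝ)) : Prop :=
  C ⊆ U ∧ ∃ e : (↥H × ↥C) ≃ₜ ↥U,
    ∀ (h : ↥H) (c : ↥C), ((e (h, c) : ↥U) : Fin n → ℝ) = tAct (h : GL (Fin n) ℝ) (c : Fin n → ℝ)

/-- The orbit equivalence relation on `U` induced by the transpose action of `H`.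
`Quot (orbitRel H U)` is the orbit space `U/Hᵀ`, carrying the quotient topology. -/
def orbitRel (H : Subgroup (GL (Fin n) ℝ)) (U : Set (Fin n → ℝ)) (x y : U) : Prop :=
  ∃ h ∈ H, tAct h (x : Fin n → ℝ) = (y : Fin n → ℝ)

/-!
A quasi-section `C` controls the whole action: finitely many translates of `C` cover any
compact set, so the elements of `H` moving one compact set into another lie in finitely many
translates `j⁻¹ ((C,C)) i`, and the action is proper; `closure C` is a compact set meeting
every orbit, so `U/Hᵀ` is compact. Conversely, since the orbit map is open and `U` is locally
compact, compactness of `U/Hᵀ` gives a compact set meeting every orbit; the interior `C` of a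
compact neighbourhood of it inside `U` is a quasi-section, because `((C,C))` lies in the
projection of the compact set of pairs `(h, ξ)` with `ξ, hᵀξ ∈ closure C`.
Properness makes the orbit relation meet compact sets in compact sets, hence closed, so the
quotient by the open orbit map is Hausdorff; being compact and second countable, it is metrizable.
-/

theorem IsOpenMap.exists_isCompact_image_eq_univ {X Y : Type*} [TopologicalSpace X]
    [TopologicalSpace Y] [WeaklyLocallyCompactSpace X] [CompactSpace Y] {f : X → Y}
    (hf : IsOpenMap f) (hsurj : Function.Surjective f) :
    ∃ K : Set X, IsCompact K ∧ f '' K = univ := by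
  choose K hK hKx using fun x : X => exists_compact_mem_nhds x
  obtain ⟨t, ht⟩ := isCompact_univ.elim_finite_subcover (fun x => f '' interior (K x))
    (fun x => hf _ isOpen_interior) fun y _ => by
      obtain ⟨x, rfl⟩ := hsurj y
      exact mem_iUnion.2 ⟨x, mem_image_of_mem f (mem_interior_iff_mem_nhds.2 (hKx x))⟩
  refine ⟨⋃ x ∈ t, K x, t.isCompact_biUnion fun x _ => hK x, eq_univ_of_univ_subset ?_⟩
  rw [image_iUnion₂]
  exact ht.trans (iUnion₂_mono fun x _ => image_mono interior_subset)

lemma tAct_mul (g h : GL (Fin n) ℝ) (v : Fin n → ℝ) :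
    tAct (g * h) v = tAct h (tAct g v) := by
  simp [tAct, Matrix.transpose_mul, Matrix.mulVec_mulVec]

lemma tAct_one (v : Fin n → ℝ) : tAct (1 : GL (Fin n) ℝ) v = v := by simp [tAct]

lemma tAct_inv_tAct (h : GL (Fin n) ℝ) (v : Fin n → ℝ) : tAct h⁻¹ (tAct h v) = v := by
  rw [← tAct_mul, mul_inv_cancel, tAct_one]

lemma tAct_tAct_inv (h : GL (Fin n) ℝ) (v : Fin n → ℝ) : tAct h (tAct h⁻¹ v) = v := by
  rw [← tAct_mul, inv_mul_cancel, tAct_one]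

lemma continuous_tAct : Continuous fun p : GL (Fin n) ℝ × (Fin n → ℝ) => tAct p.1 p.2 :=
  (Units.continuous_val.comp continuous_fst).matrix_transpose.matrix_mulVec continuous_snd

lemma isOpenMap_tAct (h : GL (Fin n) ℝ) : IsOpenMap (tAct h) :=
  IsOpenMap.of_inverse (continuous_tAct.comp (Continuous.prodMk_right h⁻¹))
    (tAct_tAct_inv h) (tAct_inv_tAct h)

variable {H : Subgroup (GL (Fin n) ℝ)} {U C K : Set (Fin n → ℝ)}

lemma tOrb_mono {D : Set (Fin n → ℝ)} (hCD : C ⊆ D) : tOrb H C ⊆ tOrb H D := by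
  rintro v ⟨h, hh, c, hc, rfl⟩
  exact ⟨h, hh, c, hCD hc, rfl⟩

lemma tOrb_subset (hUinv : TInvariant H U) (hCU : C ⊆ U) : tOrb H C ⊆ U := by
  rintro v ⟨h, hh, c, hc, rfl⟩
  exact hUinv h hh c (hCU hc)

lemma exists_finite_subset_iUnion_tAct_image (hC : IsOpen C) (hK : IsCompact K)
    (hKC : K ⊆ tOrb H C) :
    ∃ s ⊆ (H : Set (GL (Fin n) ℝ)), s.Finite ∧ K ⊆ ⋃ h ∈ s, tAct h '' C := by
  refine hK.elim_finite_subcover_image (fun h _ => isOpenMap_tAct h C hC) fun v hv => ?_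
  obtain ⟨h, hh, c, hc, rfl⟩ := hKC hv
  exact mem_iUnion₂.2 ⟨h, hh, c, hc, rfl⟩

lemma mul_mul_inv_mem_meetSet {g i j : GL (Fin n) ℝ} {ξ : Fin n → ℝ} (hg : g ∈ H) (hi : i ∈ H)
    (hj : j ∈ H) (hgξ : tAct g ξ ∈ tAct i '' C) (hξ : ξ ∈ tAct j '' C) :
    j * g * i⁻¹ ∈ meetSet H C C := by
  obtain ⟨c₁, hc₁, he₁⟩ := hgξ
  obtain ⟨c₂, hc₂, rfl⟩ := hξ
  refine ⟨H.mul_mem (H.mul_mem hj hg) (H.inv_mem hi), c₂, hc₂, ?_⟩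
  rwa [tAct_mul, tAct_mul, ← he₁, tAct_inv_tAct]

def tActPreimage (H : Subgroup (GL (Fin n) ℝ)) (U : Set (Fin n → ℝ))
    (K : Set ((Fin n → ℝ) × (Fin n → ℝ))) : Set (GL (Fin n) ℝ × (Fin n → ℝ)) :=
  {p | p.1 ∈ H ∧ p.2 ∈ U ∧ (tAct p.1 p.2, p.2) ∈ K}

def IsProperTAct (H : Subgroup (GL (Fin n) ℝ)) (U : Set (Fin n → ℝ)) : Prop :=
  ∀ K : Set ((Fin n → ℝ) × (Fin n → ℝ)), K ⊆ U ×ˢ U → IsCompact K →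
    IsCompact (tActPreimage H U K)

lemma isClosed_tActPreimage (hH : IsClosed (H : Set (GL (Fin n) ℝ)))
    {K : Set ((Fin n → ℝ) × (Fin n → ℝ))} (hKU : K ⊆ U ×ˢ U) (hK : IsClosed K) :
    IsClosed (tActPreimage H U K) := by
  convert (hH.preimage continuous_fst).inter
    (hK.preimage (continuous_tAct.prodMk continuous_snd)) using 1
  ext p
  exact ⟨fun ⟨hp, _, hpK⟩ => ⟨hp, hpK⟩, fun ⟨hp, hpK⟩ => ⟨hp, (hKU hpK).2, hpK⟩⟩

lemma isProperTAct_of_isQuasiSection (hH : IsClosed (H : Set (GL (Fin n) ℝ)))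
    (hC : IsQuasiSection H U C) : IsProperTAct H U := by
  obtain ⟨hCopen, -, hOrb, hM⟩ := hC
  intro K hKU hK
  obtain ⟨s, hsH, hs, hKs⟩ := exists_finite_subset_iUnion_tAct_image hCopen
    (hK.image continuous_fst) (by rw [hOrb]; rintro _ ⟨p, hp, rfl⟩; exact (hKU hp).1)
  obtain ⟨t, htH, ht, hKt⟩ := exists_finite_subset_iUnion_tAct_image hCopen
    (hK.image continuous_snd) (by rw [hOrb]; rintro _ ⟨p, hp, rfl⟩; exact (hKU hp).2)
  have hB : IsCompact ((fun x : GL (Fin n) ℝ × GL (Fin n) ℝ × GL (Fin n) ℝ =>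
      x.1⁻¹ * x.2.1 * x.2.2) '' (t ×ˢ closure (meetSet H C C) ×ˢ s)) :=
    (ht.isCompact.prod (hM.prod hs.isCompact)).image (by fun_prop)
  refine (hB.prod (hK.image continuous_snd)).of_isClosed_subset
    (isClosed_tActPreimage hH hKU hK.isClosed) ?_
  rintro ⟨g, ξ⟩ ⟨hg, -, hgξ⟩
  obtain ⟨i, hi, hgξi⟩ := mem_iUnion₂.1 (hKs ⟨_, hgξ, rfl⟩)
  obtain ⟨j, hj, hξj⟩ := mem_iUnion₂.1 (hKt ⟨_, hgξ, rfl⟩)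
  refine ⟨⟨(j, j * g * i⁻¹, i), ⟨hj, subset_closure ?_, hi⟩, by group⟩, _, hgξ, rfl⟩
  exact mul_mul_inv_mem_meetSet hg (hsH hi) (htH hj) hgξi hξj

lemma isCompact_closure_meetSet (hprop : IsProperTAct H U) (hC : IsCompact (closure C))
    (hCU : closure C ⊆ U) : IsCompact (closure (meetSet H C C)) := by
  refine ((hprop _ (prod_mono hCU hCU) (hC.prod hC)).image continuous_fst).closure_of_subset ?_
  rintro g ⟨hg, ξ, hξ, hgξ⟩
  exact ⟨(g, ξ), ⟨hg, hCU (subset_closure hξ), subset_closure hgξ, subset_closure hξ⟩, rfl⟩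

lemma equivalence_orbitRel : Equivalence (orbitRel H U) where
  refl _ := ⟨1, H.one_mem, tAct_one _⟩
  symm := fun ⟨h, hh, hxy⟩ => ⟨h⁻¹, H.inv_mem hh, by rw [← hxy, tAct_inv_tAct]⟩
  trans := fun ⟨g, hg, hxy⟩ ⟨h, hh, hyz⟩ => ⟨g * h, H.mul_mem hg hh, by rw [tAct_mul, hxy, hyz]⟩

lemma quot_mk_eq_iff_orbitRel {x y : U} :
    Quot.mk (orbitRel H U) x = Quot.mk (orbitRel H U) y ↔ orbitRel H U x y := by
  rw [Quot.eq, equivalence_orbitRel.eqvGen_iff]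

lemma isOpenQuotientMap_quot_mk_orbitRel (hUopen : IsOpen U) :
    IsOpenQuotientMap (Quot.mk (orbitRel H U)) := by
  refine ⟨Quot.mk_surjective, continuous_quot_mk, fun V hV => ?_⟩
  have hsat : Quot.mk (orbitRel H U) ⁻¹' (Quot.mk (orbitRel H U) '' V)
      = ⋃ h ∈ H, (fun x : U => tAct h (x : Fin n → ℝ)) ⁻¹' (Subtype.val '' V) := by
    ext x
    simp only [mem_preimage, mem_image, mem_iUnion, quot_mk_eq_iff_orbitRel]
    constructor
    · rintro ⟨v, hv, hvx⟩
      obtain ⟨h, hh, he⟩ := equivalence_orbitRel.symm hvx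
      exact ⟨h, hh, v, hv, he.symm⟩
    · rintro ⟨h, hh, v, hv, he⟩
      exact ⟨v, hv, equivalence_orbitRel.symm ⟨h, hh, he.symm⟩⟩
  rw [isOpen_coinduced, hsat]
  exact isOpen_biUnion fun h _ => (hUopen.isOpenMap_subtype_val V hV).preimage
    ((continuous_tAct.comp (Continuous.prodMk_right h)).comp continuous_subtype_val)

lemma compactSpace_quot_orbitRel (hK : IsCompact K) (hKU : K ⊆ U) (hUK : U ⊆ tOrb H K) :
    CompactSpace (Quot (orbitRel H U)) := by
  refine ⟨?_⟩
  have hK' : IsCompact (Subtype.val ⁻¹' K : Set U) :=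
    IsInducing.subtypeVal.isCompact_preimage' hK (by rwa [Subtype.range_val])
  convert hK'.image continuous_quot_mk
  refine (eq_univ_of_forall fun q => ?_).symm
  obtain ⟨x, rfl⟩ := Quot.exists_rep q
  obtain ⟨h, hh, k, hk, he⟩ := hUK x.2
  exact ⟨⟨k, hKU hk⟩, hk, quot_mk_eq_iff_orbitRel.2 ⟨h, hh, he⟩⟩

lemma exists_isOpen_isCompact_closure_tOrb_eq (hUopen : IsOpen U) (hUinv : TInvariant H U)
    [CompactSpace (Quot (orbitRel H U))] :
    ∃ C, IsOpen C ∧ IsCompact (closure C) ∧ closure C ⊆ U ∧ tOrb H C = U := by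
  have := hUopen.locallyCompactSpace
  have hπ := isOpenQuotientMap_quot_mk_orbitRel (H := H) hUopen
  obtain ⟨K, hK, hKπ⟩ := hπ.isOpenMap.exists_isCompact_image_eq_univ hπ.surjective
  obtain ⟨L, hL, hKL, hLU⟩ := exists_compact_between (hK.image continuous_subtype_val) hUopen
    (Subtype.coe_image_subset U K)
  have hclL : closure (interior L) ⊆ U := (closure_minimal interior_subset hL.isClosed).trans hLU
  refine ⟨interior L, isOpen_interior, hL.closure_of_subset interior_subset, hclL,
    (tOrb_subset hUinv (subset_closure.trans hclL)).antisymm fun u hu => ?_⟩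
  obtain ⟨k, hk, hku⟩ := hKπ.symm.subset (mem_univ (Quot.mk _ ⟨u, hu⟩))
  obtain ⟨h, hh, he⟩ := quot_mk_eq_iff_orbitRel.1 hku
  exact ⟨h, hh, k, hKL ⟨k, hk, rfl⟩, he⟩

lemma isClosed_setOf_orbitRel (hUopen : IsOpen U) (hprop : IsProperTAct H U) :
    IsClosed {q : U × U | orbitRel H U q.2 q.1} := by
  have := hUopen.locallyCompactSpace
  refine CompactlyGeneratedSpace.isClosed fun K hK => ?_
  set e : U × U → (Fin n → ℝ) × (Fin n → ℝ) := fun q => ((q.1 : Fin n → ℝ), (q.2 : Fin n → ℝ))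
  have he : Continuous e := by fun_prop
  have he_inj : e.Injective := fun q q' h =>
    Prod.ext (Subtype.ext (congrArg Prod.fst h)) (Subtype.ext (congrArg Prod.snd h))
  have hcpt := (hprop (e '' K) (by rintro _ ⟨q, -, rfl⟩; exact ⟨q.1.2, q.2.2⟩)
    (hK.image he)).image (continuous_tAct.prodMk continuous_snd)
  convert hcpt.isClosed.preimage he using 1
  ext q
  constructor
  · rintro ⟨⟨h, hh, hq⟩, hqK⟩
    exact ⟨(h, q.2), ⟨hh, q.2.2, by rw [hq]; exact ⟨q, hqK, rfl⟩⟩, Prod.ext hq rfl⟩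
  · rintro ⟨⟨h, ξ⟩, ⟨hh, -, k, hk, hke⟩, hq⟩
    obtain rfl : k = q := he_inj (hke.trans hq)
    obtain ⟨hhξ, rfl⟩ := Prod.mk.inj hq
    exact ⟨⟨h, hh, hhξ⟩, hk⟩

lemma t2Space_quot_orbitRel (hUopen : IsOpen U) (hprop : IsProperTAct H U) :
    T2Space (Quot (orbitRel H U)) := by
  rw [t2Space_iff_of_isOpenQuotientMap (isOpenQuotientMap_quot_mk_orbitRel hUopen)]
  convert isClosed_setOf_orbitRel hUopen hprop using 1
  ext q
  exact eq_comm.trans quot_mk_eq_iff_orbitRel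

lemma metrizableSpace_quot_orbitRel (hUopen : IsOpen U) [T2Space (Quot (orbitRel H U))]
    [CompactSpace (Quot (orbitRel H U))] :
    TopologicalSpace.MetrizableSpace (Quot (orbitRel H U)) :=
  have : SecondCountableTopology (Quot (orbitRel H U)) :=
    isQuotientMap_quot_mk.secondCountableTopology
      (isOpenQuotientMap_quot_mk_orbitRel hUopen).isOpenMap
  inferInstance

/-- For `U` open and `Hᵀ`-invariant, the following are equivalent:
(a) there is a topological quasi-section `C ⊆ U` with compact closure contained in `U`;
(b) `U/Hᵀ` is compact and the action of `H` on `U` is proper. Moreover, if these hold,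
`U/Hᵀ` is Hausdorff and metrizable. -/
theorem quasiSection_compactClosure_iff_proper
    (H : Subgroup (GL (Fin n) ℝ)) (hH : IsClosed (H : Set (GL (Fin n) ℝ)))
    (U : Set (Fin n → ℝ)) (hUopen : IsOpen U) (hUinv : TInvariant H U) :
    ((∃ C : Set (Fin n → ℝ), IsQuasiSection H U C ∧ IsCompact (closure C) ∧
        closure C ⊆ U) ↔
      (CompactSpace (Quot (orbitRel H U)) ∧
        ∀ K : Set ((Fin n → ℝ) × (Fin n → ℝ)), K ⊆ U ×ˢ U → IsCompact K →
          IsCompact {p : GL (Fin n) ℝ × (Fin n → ℝ) |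
            p.1 ∈ H ∧ p.2 ∈ U ∧ (tAct p.1 p.2, p.2) ∈ K})) ∧
    ((∃ C : Set (Fin n → ℝ), IsQuasiSection H U C ∧ IsCompact (closure C) ∧
        closure C ⊆ U) →
      T2Space (Quot (orbitRel H U)) ∧
        TopologicalSpace.MetrizableSpace (Quot (orbitRel H U))) := by
  have compact_and_proper : (∃ C, IsQuasiSection H U C ∧ IsCompact (closure C) ∧
      closure C ⊆ U) → CompactSpace (Quot (orbitRel H U)) ∧ IsProperTAct H U := by
    rintro ⟨C, hC, hCc, hCU⟩
    have hUC : U ⊆ tOrb H (closure C) := hC.2.2.1 ▸ tOrb_mono subset_closure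
    exact ⟨compactSpace_quot_orbitRel hCc hCU hUC, isProperTAct_of_isQuasiSection hH hC⟩
  refine ⟨⟨compact_and_proper, fun ⟨_, hprop⟩ => ?_⟩, fun hqs => ?_⟩
  · obtain ⟨C, hCopen, hCc, hCU, hOrb⟩ := exists_isOpen_isCompact_closure_tOrb_eq hUopen hUinv
    exact ⟨C, ⟨hCopen, subset_closure.trans hCU, hOrb, isCompact_closure_meetSet hprop hCc hCU⟩,
      hCc, hCU⟩
  · obtain ⟨_, hprop⟩ := compact_and_proper hqs
    have := t2Space_quot_orbitRel hUopen hprop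
    exact ⟨this, metrizableSpace_quot_orbitRel hUopen⟩
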